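/- arXiv:1903.00380 — 3 statements merged into one kernel-verified Lean document; each statement's English description precedes it below -/
import Mathlib

section
/- If Γ ≅ ℤ^m is a finite-index subgroup of a torsion-free group π, and the abelianization of π has rank m (i.e. π_ab ⊗ ℚ has dimension m as a ℚ-vector space), then π ≅ ℤ^m. -/
open scoped TensorProduct

/-- The old Mathlib definition (removed upstream): a monoid is torsion-free if no
non-identity element has finite order. -/
def Monoid.IsTorsionFree (G : Type*) [Monoid G] : Prop :=
  ∀ g : G, g ≠ 1 → ¬IsOfFinOrder g

/-!
Every element of `π` has a positive power in `Γ`, so the image of `Γ ≅ ℤ^m` under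
`π → ℚ ⊗ π_ab` spans this `m`-dimensional space; hence the images of the `m` standard
generators are linearly independent and `Γ → ℚ ⊗ π_ab` is injective. Torsion-freeness of `π`
upgrades this to injectivity of `π → ℚ ⊗ π_ab`, so `π` is abelian. Containing the finitely
generated `Γ` with finite index, `π` is finitely generated, and a finitely generated torsion-free
abelian group is free of rank `dim (ℚ ⊗ π) = m`.
-/

open Module

theorem Group.fg_of_finiteIndex {G : Type*} [Group G] (H : Subgroup G) [H.FiniteIndex]
    [Group.FG H] : Group.FG G := by
  set T := Subgroup.closure (Set.range fun q : G ⧸ H => q.out)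
  have hT : T.FG := (Subgroup.fg_iff _).mpr ⟨_, rfl, Set.finite_range _⟩
  have hsup : T ⊔ H = ⊤ := by
    refine eq_top_iff.mpr fun g _ => ?_
    have hg : (g : G ⧸ H).out⁻¹ * g ∈ H := by
      rw [← QuotientGroup.eq, QuotientGroup.out_eq']
    simpa using Subgroup.mul_mem_sup (Subgroup.subset_closure
      (Set.mem_range_self (f := fun q : G ⧸ H => q.out) g)) hg
  rw [Group.fg_def, ← hsup]
  exact hT.sup ((Group.fg_iff_subgroup_fg H).mp ‹_›)

theorem Subgroup.exists_pow_mem_of_finiteIndex {G : Type*} [Group G] (H : Subgroup G)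
    [H.FiniteIndex] (g : G) : ∃ n, 0 < n ∧ g ^ n ∈ H :=
  (H.exists_pow_mem_of_index_ne_zero FiniteIndex.index_ne_zero g).imp fun _ h => ⟨h.1, h.2.2⟩

theorem AddMonoidHom.injective_of_span_range_eq_top_of_finrank_eq {ι V : Type*} [Fintype ι]
    [AddCommGroup V] [Module ℚ V] (ψ : (ι → ℤ) →+ V)
    (hspan : Submodule.span ℚ (Set.range ψ) = ⊤) (hdim : finrank ℚ V = Fintype.card ι) :
    Function.Injective ψ := by
  classical
  set b : ι → V := fun i => ψ (Pi.single i 1)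
  have hψ : ∀ x, ψ x = ∑ i, (x i : ℚ) • b i := by
    intro x
    conv_lhs => rw [← Finset.univ_sum_single x]
    simp_rw [b, map_sum, Int.cast_smul_eq_zsmul, ← map_zsmul, ← Pi.single_smul', smul_eq_mul,
      mul_one]
  have hb : LinearIndependent ℚ b := by
    refine linearIndependent_of_top_le_span_of_card_eq_finrank ?_ hdim.symm
    rw [← hspan, Submodule.span_le]
    rintro _ ⟨x, rfl⟩
    rw [SetLike.mem_coe, hψ]
    exact Submodule.sum_mem _ fun i _ => Submodule.smul_mem _ _ (Submodule.subset_span ⟨i, rfl⟩)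
  rw [injective_iff_map_eq_zero]
  intro x hx
  rw [hψ] at hx
  funext i
  exact_mod_cast Fintype.linearIndependent_iff.mp hb _ hx i

theorem Monoid.IsTorsionFree.injective_of_finiteIndex_mulEquiv_pi_int {G V : Type*} [Group G]
    (hG : Monoid.IsTorsionFree G) [AddCommGroup V] [Module ℚ V] {m : ℕ} (H : Subgroup G)
    [H.FiniteIndex] (e : H ≃* Multiplicative (Fin m → ℤ)) (f : Additive G →+ V)
    (hspan : Submodule.span ℚ (Set.range f) = ⊤) (hdim : finrank ℚ V = m) :
    Function.Injective f := by
  let ψ : (Fin m → ℤ) →+ V :=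
    f.comp (MonoidHom.toAdditiveRight (H.subtype.comp e.symm.toMonoidHom))
  have hψ : ∀ g (hg : g ∈ H), ψ (e ⟨g, hg⟩).toAdd = f (.ofMul g) := by
    intro g hg
    simp [ψ]
  have hψ_inj : Function.Injective ψ := by
    refine ψ.injective_of_span_range_eq_top_of_finrank_eq (eq_top_iff.mpr ?_) (by simpa using hdim)
    rw [← hspan, Submodule.span_le]
    rintro _ ⟨a, rfl⟩
    obtain ⟨n, hn, hmem⟩ := H.exists_pow_mem_of_finiteIndex a.toMul
    have : f a = (n : ℚ)⁻¹ • ψ (e ⟨_, hmem⟩).toAdd := by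
      rw [hψ, ofMul_pow, map_nsmul, ofMul_toMul, ← Nat.cast_smul_eq_nsmul ℚ,
        inv_smul_smul₀ (by positivity)]
    rw [this]
    exact Submodule.smul_mem _ _ (Submodule.subset_span ⟨_, rfl⟩)
  rw [injective_iff_map_eq_zero]
  intro a ha
  obtain ⟨n, hn, hmem⟩ := H.exists_pow_mem_of_finiteIndex a.toMul
  have hψ_zero : ψ (e ⟨_, hmem⟩).toAdd = ψ 0 := by
    rw [hψ, ofMul_pow, map_nsmul, ofMul_toMul, ha, smul_zero, map_zero]
  have hpow : a.toMul ^ n = 1 := by simpa using hψ_inj hψ_zero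
  by_contra ha
  exact hG _ ha (isOfFinOrder_iff_pow_eq_one.mpr ⟨n, hn, hpow⟩)

theorem Abelianization.of_injective_of_finiteIndex_mulEquiv_pi_int {G : Type*} [Group G]
    (hG : Monoid.IsTorsionFree G) {m : ℕ} (H : Subgroup G) [H.FiniteIndex]
    (e : H ≃* Multiplicative (Fin m → ℤ))
    (hrank : finrank ℚ (ℚ ⊗[ℤ] Additive (Abelianization G)) = m) :
    Function.Injective (Abelianization.of : G → Abelianization G) := by
  let q : Additive G →+ ℚ ⊗[ℤ] Additive (Abelianization G) :=
    (TensorProduct.mk ℤ ℚ _ 1).toAddMonoidHom.comp (MonoidHom.toAdditive Abelianization.of)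
  have hspan : Submodule.span ℚ (Set.range q) = ⊤ := by
    have hsurj : Function.Surjective (MonoidHom.toAdditive (Abelianization.of (G := G))) :=
      (QuotientGroup.mk_surjective : Function.Surjective (Abelianization.of : G → _)).comp
        Additive.toMul.surjective
    rw [AddMonoidHom.coe_comp, Set.range_comp, hsurj.range_eq, Set.image_univ]
    simpa [Submodule.baseChange_eq_span, LinearMap.coe_range] using
      Submodule.baseChange_top (R := ℤ) (A := ℚ) (M := Additive (Abelianization G))
  intro a b hab
  exact hG.injective_of_finiteIndex_mulEquiv_pi_int H e q hspan hrank
    (congrArg (TensorProduct.mk ℤ ℚ _ 1 ∘ Additive.ofMul) hab)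

theorem CommGroup.nonempty_mulEquiv_pi_int_of_finrank_eq {A : Type*} [CommGroup A] [Group.FG A]
    [IsMulTorsionFree A] {m : ℕ} (hrank : finrank ℚ (ℚ ⊗[ℤ] Additive A) = m) :
    Nonempty (A ≃* Multiplicative (Fin m → ℤ)) := by
  have : Module.Finite ℤ (Additive A) := Module.Finite.iff_addGroup_fg.mpr inferInstance
  have hrankℤ : finrank ℤ (Additive A) = finrank ℤ (Fin m → ℤ) := by
    rw [← Module.finrank_baseChange (R := ℚ), hrank, Module.finrank_fin_fun]
  exact ⟨AddEquiv.toMultiplicativeRight (LinearEquiv.ofFinrankEq _ _ hrankℤ).toAddEquiv⟩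

/-- If `Γ ≅ ℤ^m` is a finite-index subgroup of a torsion-free group `π` and the
rationalized abelianization of `π` has dimension `m`, then `π ≅ ℤ^m`. -/
theorem stmt_0 (m : ℕ) (π : Type*) [Group π] (hπ : Monoid.IsTorsionFree π)
    (Γ : Subgroup π) [Γ.FiniteIndex]
    (hΓ : Nonempty (Γ ≃* Multiplicative (Fin m → ℤ)))
    (hrank : Module.finrank ℚ (ℚ ⊗[ℤ] Additive (Abelianization π)) = m) :
    Nonempty (π ≃* Multiplicative (Fin m → ℤ)) := by
  obtain ⟨e⟩ := hΓ
  let ab : π ≃* Abelianization π := .ofBijective Abelianization.of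
    ⟨Abelianization.of_injective_of_finiteIndex_mulEquiv_pi_int hπ Γ e hrank,
      QuotientGroup.mk_surjective⟩
  have : Group.FG Γ := Group.fg_of_surjective (f := e.symm.toMonoidHom) e.symm.surjective
  have : Group.FG π := Group.fg_of_finiteIndex Γ
  have : Group.FG (Abelianization π) := Group.fg_of_surjective (f := ab.toMonoidHom) ab.surjective
  have : IsMulTorsionFree (Abelianization π) := .of_not_isOfFinOrder fun x hx hfin =>
    hπ (ab.symm x) (by simpa using hx) (ab.symm.toMonoidHom.isOfFinOrder hfin)
  obtain ⟨f⟩ := CommGroup.nonempty_mulEquiv_pi_int_of_finrank_eq hrank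
  exact ⟨ab.trans f⟩
end

section
/- In the exterior algebra Λ(v₁,…,v_n) over ℚ on generators of degree 1, equipped with a differential d satisfying d(v_j) ∈ Λ²(v₁,…,v_{j−1}) (a nilmanifold minimal model), the top word c = v₁v₂⋯v_n is a cocycle, and c is not a coboundary. -/
open ExteriorAlgebra

/-! Expanding `d (v_{i₁} ⋯ v_{i_k})` by the Leibniz rule, each term replaces one letter `v_i` by a
combination of words `v_a v_b` with `a, b < i`. When `k + 1 ≥ n`, such a word of length `k + 1`
avoids the letter `i`, so it repeats a letter and vanishes; hence `d` kills `Λ^{n-1}` and `Λ^n`.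
The coefficient of `v₁ ⋯ v_n` (the determinant on `Λ^n`, zero in other degrees) therefore vanishes
on the image of `d`, which raises degree by one, while it equals `1` on `c`. -/

namespace ExteriorAlgebra

variable (R : Type*) [CommRing R] {n : ℕ}

noncomputable def basisWord (l : List (Fin n)) : ExteriorAlgebra R (Fin n → R) :=
  (l.map fun i => ι R (Pi.single i 1)).prod

@[simp]
theorem basisWord_nil : basisWord R ([] : List (Fin n)) = 1 := rfl

@[simp]
theorem basisWord_cons (i : Fin n) (l : List (Fin n)) :
    basisWord R (i :: l) = ι R (Pi.single i 1) * basisWord R l := by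
  simp [basisWord]

@[simp]
theorem basisWord_append (l₁ l₂ : List (Fin n)) :
    basisWord R (l₁ ++ l₂) = basisWord R l₁ * basisWord R l₂ := by
  simp [basisWord]

theorem basisWord_ofFn {j : ℕ} (v : Fin j → Fin n) :
    basisWord R (List.ofFn v) = ιMulti R j fun t => Pi.single (v t) 1 := by
  rw [ιMulti_apply, basisWord, List.map_ofFn]
  rfl

theorem basisWord_eq_zero_of_not_nodup {l : List (Fin n)} (hl : ¬ l.Nodup) :
    basisWord R l = 0 := by
  simp only [List.nodup_iff_injective_get, Function.Injective, not_forall] at hl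
  obtain ⟨p, q, hpq, hne⟩ := hl
  rw [← List.ofFn_get l, basisWord_ofFn]
  exact AlternatingMap.map_eq_zero_of_eq _ _ (by rw [hpq]) hne

theorem map_eq_zero_of_forall_basisWord {M : Type*} [AddCommGroup M] [Module R M]
    (f : ExteriorAlgebra R (Fin n → R) →ₗ[R] M) {j : ℕ}
    (hf : ∀ v : Fin j → Fin n, f (basisWord R (List.ofFn v)) = 0)
    {a : ExteriorAlgebra R (Fin n → R)} (ha : a ∈ ⋀[R]^j (Fin n → R)) : f a = 0 := by
  have hιMulti : f.compMultilinearMap (ιMulti R j).toMultilinearMap = 0 :=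
    Module.Basis.ext_multilinear (fun _ => Pi.basisFun R (Fin n)) fun v => by
      simpa [basisWord_ofFn] using hf v
  rw [← ιMulti_span_fixedDegree] at ha
  induction ha using Submodule.span_induction with
  | mem _ hx =>
    obtain ⟨w, rfl⟩ := hx
    exact congr($hιMulti w)
  | zero => exact map_zero f
  | add _ _ _ _ hx hy => rw [map_add, hx, hy, add_zero]
  | smul _ _ _ hx => rw [map_smul, hx, smul_zero]

theorem basisWord_append_cons_cons_eq_zero {pre rest : List (Fin n)} {i a b : Fin n}
    (hl : (pre ++ i :: rest).Nodup) (hlen : n ≤ (pre ++ i :: rest).length + 1)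
    (ha : a ≠ i) (hb : b ≠ i) : basisWord R (pre ++ a :: b :: rest) = 0 := by
  refine basisWord_eq_zero_of_not_nodup R fun hnd => ?_
  have hi : i ∉ pre ++ a :: b :: rest := by
    obtain ⟨-, hir, hdisj⟩ := List.nodup_append.mp hl
    simp only [List.mem_append, List.mem_cons, not_or]
    exact ⟨fun hip => hdisj i hip i List.mem_cons_self rfl, ha.symm, hb.symm,
      (List.nodup_cons.mp hir).1⟩
  have := (List.nodup_cons.mpr ⟨hi, hnd⟩).length_le_card
  simp only [List.length_cons, List.length_append, Fintype.card_fin] at this hlen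
  omega

theorem basisWord_mul_mul_basisWord_eq_zero {pre rest : List (Fin n)} {i : Fin n}
    (hl : (pre ++ i :: rest).Nodup) (hlen : n ≤ (pre ++ i :: rest).length + 1)
    {q : ExteriorAlgebra R (Fin n → R)}
    (hq : q ∈ (Submodule.span R {x | ∃ a : Fin n, a < i ∧ x = ι R (Pi.single a 1)}) ^ 2) :
    basisWord R pre * (q * basisWord R rest) = 0 := by
  suffices (Submodule.span R {x | ∃ a : Fin n, a < i ∧ x = ι R (Pi.single a 1)}) ^ 2 ≤
      LinearMap.ker (LinearMap.mulLeft R (basisWord R pre) ∘ₗ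
        LinearMap.mulRight R (basisWord R rest)) from this hq
  rw [pow_two, Submodule.span_mul_span, Submodule.span_le]
  rintro _ ⟨_, ⟨a, ha, rfl⟩, _, ⟨b, hb, rfl⟩, rfl⟩
  simpa [mul_assoc] using
    basisWord_append_cons_cons_eq_zero R hl hlen ha.ne hb.ne

section Cocycle

variable {R} (d : Module.End R (ExteriorAlgebra R (Fin n → R)))

theorem map_basisWord_eq_zero (hd1 : d 1 = 0)
    (hι : ∀ x b, d (ι R x * b) = d (ι R x) * b - ι R x * d b)
    (htri : ∀ j : Fin n, d (ι R (Pi.single j 1)) ∈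
      (Submodule.span R {x | ∃ i : Fin n, i < j ∧ x = ι R (Pi.single i 1)}) ^ 2)
    {l : List (Fin n)} (hl : l.Nodup) (hlen : n ≤ l.length + 1) :
    d (basisWord R l) = 0 := by
  suffices ∀ suf pre, pre ++ suf = l → basisWord R pre * d (basisWord R suf) = 0 by
    simpa using this l [] rfl
  intro suf
  induction suf with
  | nil => simp [hd1]
  | cons i rest ih =>
    rintro pre rfl
    have hlower := basisWord_mul_mul_basisWord_eq_zero R hl hlen (htri i)
    have hupper := ih (pre ++ [i]) (by simp)
    simp only [basisWord_append, basisWord_cons, basisWord_nil, mul_one] at hupper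
    rw [basisWord_cons, hι, mul_sub, hlower, ← mul_assoc, hupper, sub_zero]

theorem map_eq_zero_of_mem_exteriorPower (hd1 : d 1 = 0)
    (hι : ∀ x b, d (ι R x * b) = d (ι R x) * b - ι R x * d b)
    (htri : ∀ j : Fin n, d (ι R (Pi.single j 1)) ∈
      (Submodule.span R {x | ∃ i : Fin n, i < j ∧ x = ι R (Pi.single i 1)}) ^ 2)
    {j : ℕ} (hj : n ≤ j + 1) {a : ExteriorAlgebra R (Fin n → R)}
    (ha : a ∈ ⋀[R]^j (Fin n → R)) : d a = 0 := by
  refine map_eq_zero_of_forall_basisWord R d (fun v => ?_) ha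
  by_cases hv : Function.Injective v
  · exact map_basisWord_eq_zero d hd1 hι htri (List.nodup_ofFn.mpr hv) (by simpa using hj)
  · rw [basisWord_eq_zero_of_not_nodup R (mt List.nodup_ofFn.mp hv), map_zero]

end Cocycle

section TopCoeff

noncomputable def topCoeff : ExteriorAlgebra R (Fin n → R) →ₗ[R] R :=
  liftAlternating <| Pi.single (M := fun i => (Fin n → R) [⋀^Fin i]→ₗ[R] R) n
    (Matrix.detRowAlternating (n := Fin n) (R := R))

theorem topCoeff_ιMulti_single : topCoeff R (ιMulti R n fun i => Pi.single i 1) = 1 := by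
  have hI : (Matrix.of fun i : Fin n => (Pi.single i 1 : Fin n → R)) = 1 := by
    ext i j
    rw [Matrix.one_eq_pi_single]
    rfl
  rw [topCoeff, liftAlternating_apply_ιMulti, Pi.single_eq_same]
  exact (congrArg Matrix.det hI).trans Matrix.det_one

theorem topCoeff_eq_zero_of_mem {m : ℕ} (hm : m ≠ n) {a : ExteriorAlgebra R (Fin n → R)}
    (ha : a ∈ ⋀[R]^m (Fin n → R)) : topCoeff R a = 0 := by
  rw [← ιMulti_span_fixedDegree] at ha
  induction ha using Submodule.span_induction with
  | mem _ hx =>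
    obtain ⟨w, rfl⟩ := hx
    rw [topCoeff, liftAlternating_apply_ιMulti, Pi.single_eq_of_ne hm]
    rfl
  | zero => exact map_zero _
  | add _ _ _ _ hx hy => rw [map_add, hx, hy, add_zero]
  | smul _ _ _ hx => rw [map_smul, hx, smul_zero]

variable {R} in
theorem topCoeff_map_eq_zero (d : Module.End R (ExteriorAlgebra R (Fin n → R)))
    (hdeg : ∀ j, ∀ a ∈ ⋀[R]^j (Fin n → R), d a ∈ ⋀[R]^(j + 1) (Fin n → R))
    (hclosed : ∀ j, j + 1 = n → ∀ a ∈ ⋀[R]^j (Fin n → R), d a = 0)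
    (a : ExteriorAlgebra R (Fin n → R)) : topCoeff R (d a) = 0 := by
  induction a using DirectSum.Decomposition.inductionOn fun i => ⋀[R]^i (Fin n → R) with
  | zero => rw [map_zero, map_zero]
  | add _ _ hx hy => rw [map_add, map_add, hx, hy, add_zero]
  | @homogeneous j x =>
    by_cases hj : j + 1 = n
    · rw [hclosed j hj x x.2, map_zero]
    · exact topCoeff_eq_zero_of_mem R hj (hdeg j x x.2)

end TopCoeff

end ExteriorAlgebra

theorem stmt_8_general (n : ℕ)
    (d : Module.End ℚ (ExteriorAlgebra ℚ (Fin n → ℚ)))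
    (hdeg : ∀ (j : ℕ), ∀ a ∈ (LinearMap.range (ι ℚ :
        (Fin n → ℚ) →ₗ[ℚ] ExteriorAlgebra ℚ (Fin n → ℚ)) ^ j : Submodule ℚ _),
      d a ∈ (LinearMap.range (ι ℚ :
        (Fin n → ℚ) →ₗ[ℚ] ExteriorAlgebra ℚ (Fin n → ℚ)) ^ (j + 1) : Submodule ℚ _))
    (hLeib : ∀ (p : ℕ) (a b : ExteriorAlgebra ℚ (Fin n → ℚ)),
      a ∈ (LinearMap.range (ι ℚ :
        (Fin n → ℚ) →ₗ[ℚ] ExteriorAlgebra ℚ (Fin n → ℚ)) ^ p : Submodule ℚ _) →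
      d (a * b) = d a * b + ((-1 : ℚ) ^ p) • (a * d b))
    (htri : ∀ j : Fin n, d (ι ℚ (Pi.single j (1 : ℚ))) ∈
      ((Submodule.span ℚ {x : ExteriorAlgebra ℚ (Fin n → ℚ) |
          ∃ i : Fin n, i < j ∧ x = ι ℚ (Pi.single i (1 : ℚ))}) ^ 2 : Submodule ℚ _)) :
    d ((List.ofFn fun i : Fin n => ι ℚ (Pi.single i (1 : ℚ))).prod) = 0 ∧
      ¬ ∃ a, d a = (List.ofFn fun i : Fin n => ι ℚ (Pi.single i (1 : ℚ))).prod := by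
  have hd1 : d 1 = 0 := by
    simpa using hLeib 0 1 1 (by simp)
  have hι : ∀ x b, d (ι ℚ x * b) = d (ι ℚ x) * b - ι ℚ x * d b := fun x b => by
    simpa [sub_eq_add_neg] using hLeib 1 (ι ℚ x) b (by simp)
  have hclosed : ∀ j, n ≤ j + 1 → ∀ a ∈ ⋀[ℚ]^j (Fin n → ℚ), d a = 0 := fun _ hj _ =>
    map_eq_zero_of_mem_exteriorPower d hd1 hι htri hj
  rw [← ιMulti_apply]
  refine ⟨hclosed n n.le_succ _ (ιMulti_range ℚ n (Set.mem_range_self _)), ?_⟩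
  rintro ⟨a, ha⟩
  have htop := topCoeff_map_eq_zero d hdeg (fun j hj => hclosed j hj.ge) a
  rw [ha, topCoeff_ιMulti_single] at htop
  exact one_ne_zero htop

/-- In the exterior algebra `Λ(v₁,…,v_n)` on degree-one generators with a differential
`d` (graded Leibniz rule, `d² = 0`, raising word length by one) such that each
`d(v_j)` is quadratic in earlier generators, the top word `c = v₁⋯v_n` is a cocycle
and not a coboundary. -/
theorem stmt_8 (n : ℕ) (hn : 0 < n)
    (d : Module.End ℚ (ExteriorAlgebra ℚ (Fin n → ℚ)))
    (hd2 : ∀ a, d (d a) = 0)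
    (hdeg : ∀ (j : ℕ), ∀ a ∈ (LinearMap.range (ι ℚ :
        (Fin n → ℚ) →ₗ[ℚ] ExteriorAlgebra ℚ (Fin n → ℚ)) ^ j : Submodule ℚ _),
      d a ∈ (LinearMap.range (ι ℚ :
        (Fin n → ℚ) →ₗ[ℚ] ExteriorAlgebra ℚ (Fin n → ℚ)) ^ (j + 1) : Submodule ℚ _))
    (hLeib : ∀ (p : ℕ) (a b : ExteriorAlgebra ℚ (Fin n → ℚ)),
      a ∈ (LinearMap.range (ι ℚ :
        (Fin n → ℚ) →ₗ[ℚ] ExteriorAlgebra ℚ (Fin n → ℚ)) ^ p : Submodule ℚ _) →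
      d (a * b) = d a * b + ((-1 : ℚ) ^ p) • (a * d b))
    (htri : ∀ j : Fin n, d (ι ℚ (Pi.single j (1 : ℚ))) ∈
      ((Submodule.span ℚ {x : ExteriorAlgebra ℚ (Fin n → ℚ) |
          ∃ i : Fin n, i < j ∧ x = ι ℚ (Pi.single i (1 : ℚ))}) ^ 2 : Submodule ℚ _)) :
    d ((List.ofFn fun i : Fin n => ι ℚ (Pi.single i (1 : ℚ))).prod) = 0 ∧
      ¬ ∃ a, d a = (List.ofFn fun i : Fin n => ι ℚ (Pi.single i (1 : ℚ))).prod :=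
  stmt_8_general n d hdeg hLeib htri
end

section
/- Let H = ℚ[a,b,α,β]/(a², b², α², β², aα, aβ, bα, bβ, ab − αβ) with all generators in degree 2 (the cohomology of (S²×S²)#(S²×S²)). The linear map on generators θ(a) = −α, θ(b) = 0, θ(α) = 0, θ(β) = b extends to a well-defined degree-zero derivation of H, and this derivation is nilpotent and nonzero. -/
/-- The defining ideal of `H^*((S²×S²) # (S²×S²); ℚ) = ℚ[a,b,α,β]/(a², b², α², β²,
aα, aβ, bα, bβ, ab − αβ)`, with `a = X 0`, `b = X 1`, `α = X 2`, `β = X 3` (all of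
degree 2, hence commuting). -/
noncomputable def connSumIdeal : Ideal (MvPolynomial (Fin 4) ℚ) :=
  Ideal.span {MvPolynomial.X 0 ^ 2, MvPolynomial.X 1 ^ 2, MvPolynomial.X 2 ^ 2,
    MvPolynomial.X 3 ^ 2, MvPolynomial.X 0 * MvPolynomial.X 2,
    MvPolynomial.X 0 * MvPolynomial.X 3, MvPolynomial.X 1 * MvPolynomial.X 2,
    MvPolynomial.X 1 * MvPolynomial.X 3,
    MvPolynomial.X 0 * MvPolynomial.X 1 - MvPolynomial.X 2 * MvPolynomial.X 3}

/-!
`θ` is induced by the derivation of `ℚ[a,b,α,β]` with `a ↦ -α`, `β ↦ b`, `b, α ↦ 0`, which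
maps each defining relation into the ideal (e.g. `θ(aβ) = ab - αβ`). Its image lies in
`(b, α)`, which it kills, so `θ²` takes values in `(b, α)² ⊆ connSumIdeal`, i.e. `θ² = 0` on `H`.
Finally `θ(β) = b` is nonzero in `H`: sending `b ↦ ε` and the other generators to `0` kills
`connSumIdeal` in the dual numbers.
-/

namespace Derivation

variable {R A : Type*} [CommRing R] [CommRing A] [Algebra R A] (D : Derivation R A A)

theorem map_mem_span_of_forall_mem {S : Set A} (hS : ∀ s ∈ S, D s ∈ Ideal.span S) {x : A}
    (hx : x ∈ Ideal.span S) : D x ∈ Ideal.span S := by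
  induction hx using Submodule.span_induction with
  | mem s hs => exact hS s hs
  | zero => simp
  | add x y _ _ hx hy => simpa using add_mem hx hy
  | smul a x hxS hx =>
    rw [smul_eq_mul, leibniz, smul_eq_mul, smul_eq_mul]
    exact add_mem (Ideal.mul_mem_left _ _ hx) (Ideal.mul_mem_right _ _ hxS)

theorem map_mem_span_mul_span {S : Set A} (hD : ∀ a, D a ∈ Ideal.span S)
    (hS : ∀ s ∈ S, D s = 0) {x : A} (hx : x ∈ Ideal.span S) :
    D x ∈ Ideal.span S * Ideal.span S := by
  induction hx using Submodule.span_induction with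
  | mem s hs => simp [hS s hs]
  | zero => simp
  | add x y _ _ hx hy => simpa using add_mem hx hy
  | smul a x hxS hx =>
    rw [smul_eq_mul, leibniz, smul_eq_mul, smul_eq_mul]
    exact add_mem (Ideal.mul_mem_left _ _ hx) (Ideal.mul_mem_mul hxS (hD a))

variable {I : Ideal A} (hI : ∀ x ∈ I, D x ∈ I)

noncomputable def mapQ : Derivation R (A ⧸ I) (A ⧸ I) where
  toLinearMap := (I.restrictScalars R).mapQ (I.restrictScalars R) D.toLinearMap hI
  map_one_eq_zero' := by
    show Ideal.Quotient.mk I (D 1) = 0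
    simp
  leibniz' x y := by
    obtain ⟨x, rfl⟩ := Ideal.Quotient.mk_surjective x
    obtain ⟨y, rfl⟩ := Ideal.Quotient.mk_surjective y
    show Ideal.Quotient.mk I (D (x * y)) = _
    simp only [leibniz, smul_eq_mul, map_add, map_mul]
    rfl

@[simp]
theorem mapQ_mk (x : A) : D.mapQ hI (Ideal.Quotient.mk I x) = Ideal.Quotient.mk I (D x) :=
  rfl

end Derivation

namespace MvPolynomial

variable {R σ : Type*} [CommRing R]

theorem derivation_mem_of_forall_X_mem (D : Derivation R (MvPolynomial σ R) (MvPolynomial σ R))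
    {J : Ideal (MvPolynomial σ R)} (h : ∀ i, D (X i) ∈ J) (p : MvPolynomial σ R) : D p ∈ J := by
  induction p using MvPolynomial.induction_on with
  | C a => simp
  | add p q hp hq => simpa using add_mem hp hq
  | mul_X p i hp =>
    rw [Derivation.leibniz, smul_eq_mul, smul_eq_mul]
    exact add_mem (Ideal.mul_mem_left _ _ (h i)) (Ideal.mul_mem_left _ _ hp)

end MvPolynomial

open MvPolynomial

noncomputable def connSumDer : Derivation ℚ (MvPolynomial (Fin 4) ℚ) (MvPolynomial (Fin 4) ℚ) :=
  mkDerivation ℚ ![-X 2, 0, 0, X 1]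

@[simp] theorem connSumDer_X_zero : connSumDer (X 0) = -X 2 := mkDerivation_X _ _ _
@[simp] theorem connSumDer_X_one : connSumDer (X 1) = 0 := mkDerivation_X _ _ _
@[simp] theorem connSumDer_X_two : connSumDer (X 2) = 0 := mkDerivation_X _ _ _
@[simp] theorem connSumDer_X_three : connSumDer (X 3) = X 1 := mkDerivation_X _ _ _

theorem connSumDer_mem_span (p : MvPolynomial (Fin 4) ℚ) :
    connSumDer p ∈ Ideal.span {X 1, X 2} := by
  refine derivation_mem_of_forall_X_mem _ (fun i => ?_) p
  fin_cases i <;> simp <;> exact Ideal.subset_span (by simp)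

theorem span_mul_span_le_connSumIdeal :
    Ideal.span {X 1, X 2} * Ideal.span {X 1, X 2} ≤ connSumIdeal := by
  rw [Ideal.span_mul_span', connSumIdeal, Ideal.span_le, Set.mul_subset_iff]
  rintro _ (rfl | rfl) _ (rfl | rfl) <;> apply Ideal.subset_span <;> simp [sq, mul_comm]

theorem connSumDer_mem_connSumIdeal {p : MvPolynomial (Fin 4) ℚ} (hp : p ∈ connSumIdeal) :
    connSumDer p ∈ connSumIdeal := by
  refine connSumDer.map_mem_span_of_forall_mem (fun s hs => ?_) hp
  have key (c g : MvPolynomial (Fin 4) ℚ) (hg : g ∈ connSumIdeal) (h : connSumDer s = c * g) :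
      connSumDer s ∈ connSumIdeal := h ▸ Ideal.mul_mem_left _ c hg
  simp only [Set.mem_insert_iff, Set.mem_singleton_iff] at hs
  rcases hs with rfl | rfl | rfl | rfl | rfl | rfl | rfl | rfl | rfl
  · refine key (-2) (X 0 * X 2) (Ideal.subset_span (by simp)) ?_
    simp [Derivation.leibniz_pow]
  · simp
  · simp
  · refine key 2 (X 1 * X 3) (Ideal.subset_span (by simp)) ?_
    simp [Derivation.leibniz_pow]; ring
  · refine key (-1) (X 2 ^ 2) (Ideal.subset_span (by simp)) ?_
    simp [Derivation.leibniz]; ring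
  · refine key 1 (X 0 * X 1 - X 2 * X 3) (Ideal.subset_span (by simp)) ?_
    simp [Derivation.leibniz]; ring
  · simp [Derivation.leibniz]
  · refine key 1 (X 1 ^ 2) (Ideal.subset_span (by simp)) ?_
    simp [Derivation.leibniz]; ring
  · refine key (-2) (X 1 * X 2) (Ideal.subset_span (by simp)) ?_
    simp [Derivation.leibniz]; ring

theorem connSumDer_connSumDer_mem_connSumIdeal (p : MvPolynomial (Fin 4) ℚ) :
    connSumDer (connSumDer p) ∈ connSumIdeal :=
  span_mul_span_le_connSumIdeal <| connSumDer.map_mem_span_mul_span connSumDer_mem_span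
    (by rintro _ (rfl | rfl) <;> simp) (connSumDer_mem_span p)

theorem X_one_notMem_connSumIdeal : (X 1 : MvPolynomial (Fin 4) ℚ) ∉ connSumIdeal := by
  let φ : MvPolynomial (Fin 4) ℚ →ₐ[ℚ] DualNumber ℚ := aeval (Pi.single 1 DualNumber.eps)
  have hφ : connSumIdeal ≤ RingHom.ker φ := by
    rw [connSumIdeal, Ideal.span_le]
    rintro _ (rfl | rfl | rfl | rfl | rfl | rfl | rfl | rfl | rfl) <;>
      simp [φ, sq, DualNumber.eps_mul_eps]
  intro h
  simpa [φ] using congr(TrivSqZeroExt.snd $(hφ h))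

/-- On `H = ℚ[a,b,α,β]/(a², b², α², β², aα, aβ, bα, bβ, ab − αβ)` (the cohomology of
`(S²×S²) # (S²×S²)`, all generators of degree 2), the assignment `θ(a) = −α`,
`θ(b) = 0`, `θ(α) = 0`, `θ(β) = b` extends to a well-defined degree-zero derivation,
which is nilpotent and nonzero. -/
theorem stmt_15 :
    ∃ θ : Module.End ℚ (MvPolynomial (Fin 4) ℚ ⧸ connSumIdeal),
      (∀ p q, θ (p * q) = θ p * q + p * θ q) ∧
      θ (Ideal.Quotient.mk connSumIdeal (MvPolynomial.X 0)) =
        - Ideal.Quotient.mk connSumIdeal (MvPolynomial.X 2) ∧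
      θ (Ideal.Quotient.mk connSumIdeal (MvPolynomial.X 1)) = 0 ∧
      θ (Ideal.Quotient.mk connSumIdeal (MvPolynomial.X 2)) = 0 ∧
      θ (Ideal.Quotient.mk connSumIdeal (MvPolynomial.X 3)) =
        Ideal.Quotient.mk connSumIdeal (MvPolynomial.X 1) ∧
      IsNilpotent θ ∧ θ ≠ 0 := by
  set D := connSumDer.mapQ fun _ => connSumDer_mem_connSumIdeal
  have hD (p : MvPolynomial (Fin 4) ℚ) :
      D (Ideal.Quotient.mk _ p) = Ideal.Quotient.mk _ (connSumDer p) :=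
    Derivation.mapQ_mk _ _ p
  refine ⟨D, fun p q => ?_, by simp [hD], by simp [hD], by simp [hD], by simp [hD], ⟨2, ?_⟩, ?_⟩
  · rw [Derivation.coeFn_coe, D.leibniz, smul_eq_mul, smul_eq_mul, add_comm, mul_comm q]
  · refine LinearMap.ext fun x => ?_
    obtain ⟨p, rfl⟩ := Ideal.Quotient.mk_surjective x
    simpa [sq, hD, Ideal.Quotient.eq_zero_iff_mem] using connSumDer_connSumDer_mem_connSumIdeal p
  · intro h
    refine X_one_notMem_connSumIdeal ?_
    simpa [hD, Ideal.Quotient.eq_zero_iff_mem] using congr($h (Ideal.Quotient.mk _ (X 3)))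
end
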